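/- arXiv:0810.4627 — 2 statements merged into one kernel-verified Lean document; each statement's English description precedes it below -/
import Mathlib

section
/- Let φ : X → Y be a bi-closing factor code from a shift space X onto an irreducible shift space Y. Then there exists d > 0 such that every doubly transitive point of Y has exactly d preimages, and every point of Y has at least d preimages. -/
open Set Function Filter

variable {A : Type*} {B : Type*} {C : Type*}

/-- The shift map on the full shift. -/
def shiftMap (x : ℤ → A) : ℤ → A := fun i => x (i + 1)

/-- A shift space (subshift): a closed shift-invariant subset of the full shift. -/
def IsSubshift [TopologicalSpace A] (X : Set (ℤ → A)) : Prop :=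
  IsClosed X ∧ shiftMap '' X = X

/-- The word `w` occurs in `x` at position `k`. -/
def OccursAt (x : ℤ → A) (k : ℤ) (w : List A) : Prop :=
  ∀ i : Fin w.length, x (k + ((i : ℕ) : ℤ)) = w.get i

/-- The word `w` belongs to the language of `X`. -/
def WordIn (X : Set (ℤ → A)) (w : List A) : Prop :=
  ∃ x ∈ X, ∃ k : ℤ, OccursAt x k w

/-- Irreducibility of a shift space. -/
def IrreducibleSubshift (X : Set (ℤ → A)) : Prop :=
  ∀ u v : List A, WordIn X u → WordIn X v → ∃ w : List A, WordIn X (u ++ w ++ v)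

/-- Nonwandering shift space. -/
def NonwanderingSubshift (X : Set (ℤ → A)) : Prop :=
  ∀ u : List A, WordIn X u → ∃ w : List A, WordIn X (u ++ w ++ u)

/-- A shift of finite type: defined by a finite set of forbidden words. -/
def IsSFT (X : Set (ℤ → A)) : Prop :=
  ∃ F : Finset (List A), X = {x : ℤ → A | ∀ w ∈ F, ∀ k : ℤ, ¬ OccursAt x k w}

/-- A (sliding block) code: a continuous shift-commuting map between shift spaces. -/
def IsCode [TopologicalSpace A] [TopologicalSpace B]
    {X : Set (ℤ → A)} {Y : Set (ℤ → B)} (φ : X → Y) : Prop :=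
  Continuous φ ∧
    ∀ (x : X) (hx : shiftMap (x : ℤ → A) ∈ X),
      ((φ ⟨shiftMap (x : ℤ → A), hx⟩ : Y) : ℤ → B) = shiftMap ((φ x : Y) : ℤ → B)

/-- A sofic shift: a factor of a shift of finite type. -/
def IsSofic [TopologicalSpace A] (Y : Set (ℤ → A)) : Prop :=
  ∃ (n : ℕ) (Z : Set (ℤ → Fin n)), IsSubshift Z ∧ IsSFT Z ∧
    ∃ ψ : Z → Y, IsCode ψ ∧ Function.Surjective ψ

/-- Two points are left asymptotic if they agree on all sufficiently negative coordinates. -/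
def LeftAsymptotic (x y : ℤ → A) : Prop := ∃ N : ℤ, ∀ i ≤ N, x i = y i

/-- Two points are right asymptotic if they agree on all sufficiently positive coordinates. -/
def RightAsymptotic (x y : ℤ → A) : Prop := ∃ N : ℤ, ∀ i, N ≤ i → x i = y i

/-- A code is right closing if it never collapses two distinct left asymptotic points. -/
def RightClosing {X : Set (ℤ → A)} {Y : Set (ℤ → B)} (φ : X → Y) : Prop :=
  ∀ x x' : X, LeftAsymptotic (x : ℤ → A) (x' : ℤ → A) → φ x = φ x' → x = x'

/-- A code is left closing if it never collapses two distinct right asymptotic points. -/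
def LeftClosing {X : Set (ℤ → A)} {Y : Set (ℤ → B)} (φ : X → Y) : Prop :=
  ∀ x x' : X, RightAsymptotic (x : ℤ → A) (x' : ℤ → A) → φ x = φ x' → x = x'

/-- Bi-closing: both right and left closing. -/
def BiClosing {X : Set (ℤ → A)} {Y : Set (ℤ → B)} (φ : X → Y) : Prop :=
  RightClosing φ ∧ LeftClosing φ

/-- Finite-to-one map. -/
def FiniteToOne {α β : Type*} (φ : α → β) : Prop := ∀ y : β, (φ ⁻¹' {y}).Finite

/-- Every fiber has exactly `d` elements. -/
def ExactlyDToOne {α β : Type*} (φ : α → β) (d : ℕ) : Prop :=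
  ∀ y : β, (φ ⁻¹' {y}).Finite ∧ Nat.card (φ ⁻¹' {y}) = d

/-- Constant-to-one map. -/
def ConstantToOne {α β : Type*} (φ : α → β) : Prop := ∃ d : ℕ, ExactlyDToOne φ d

/-- A doubly transitive point: every word of `Y` occurs infinitely often to the left
and to the right. -/
def DoublyTransitive (Y : Set (ℤ → A)) (y : ℤ → A) : Prop :=
  ∀ w : List A, WordIn Y w → ∀ N : ℤ,
    (∃ k ≥ N, OccursAt y k w) ∧ (∃ k ≤ N, OccursAt y k w)

/-- The maximal nonwandering subshift of `X`. -/
def OmegaSet [TopologicalSpace A] (X : Set (ℤ → A)) : Set (ℤ → A) :=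
  ⋃₀ {Z : Set (ℤ → A) | Z ⊆ X ∧ IsSubshift Z ∧ NonwanderingSubshift Z}

/-- Topological entropy of a subshift, via the growth rate of the number of words. -/
noncomputable def subshiftEntropy (X : Set (ℤ → A)) : ℝ :=
  Filter.limsup
    (fun n : ℕ => Real.log (Nat.card {w : List A | w.length = n ∧ WordIn X w}) / n)
    Filter.atTop

/-- An irreducible component of `X`: a maximal nonempty irreducible subshift of `X`. -/
def IsIrreducibleComponent [TopologicalSpace A] (X X₀ : Set (ℤ → A)) : Prop :=
  X₀ ⊆ X ∧ IsSubshift X₀ ∧ X₀.Nonempty ∧ IrreducibleSubshift X₀ ∧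
    ∀ Z : Set (ℤ → A), Z ⊆ X → IsSubshift Z → IrreducibleSubshift Z → X₀ ⊆ Z → Z = X₀

-- The metric on a shift space: `d(x,y) = 2^{-k}` where `k` is maximal with
-- `x` and `y` agreeing on `[-k,k]`, and `0` if `x = y`.
open Classical in
noncomputable def shiftDist (x y : ℤ → A) : ℝ :=
  if x = y then 0
  else (2 : ℝ) ^ (-((sSup {n : ℕ | ∀ i : ℤ, |i| ≤ (n : ℤ) → x i = y i} : ℕ) : ℤ))

/-!
By compactness, the right and left closing properties hold with finite windows: on a fiber, the
coordinates in `[-m, 0]` determine coordinate `1`, and those in `[0, m]` determine coordinate `-1`.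
Shifting these windows propagates agreement outward, so two points of a fiber that agree on
`[-n, n]` are equal. Consequently fibers are finite, and the set of points with at least `k`
preimages is closed (`k` preimages that pairwise differ on `[-n, n]` have limits that still do).
That set is shift invariant, so for a doubly transitive `y` it contains the orbit closure of `y`,
which is all of `Y`. Hence `y` has the least number `d` of preimages of any point.
-/

section Compactness

variable {Z ι α : Type*} [TopologicalSpace Z] [TopologicalSpace α] [DiscreteTopology α]

theorem IsCompact.exists_finite_eqOn_imp {K : Set Z} (hK : IsCompact K) {f g : Z → ι → α}
    (hf : Continuous f) (hg : Continuous g) {S : Set ι} {i₀ : ι}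
    (h : ∀ z ∈ K, EqOn (f z) (g z) S → f z i₀ = g z i₀) :
    ∃ F ⊆ S, F.Finite ∧ ∀ z ∈ K, EqOn (f z) (g z) F → f z i₀ = g z i₀ := by
  have hdiff : ∀ i, IsClopen {z | f z i ≠ g z i} := fun i =>
    (isClopen_discrete {p : α × α | p.1 ≠ p.2}).preimage
      (((continuous_apply i).comp hf).prodMk ((continuous_apply i).comp hg))
  have hcover : K ∩ {z | f z i₀ ≠ g z i₀} ⊆ ⋃ i ∈ S, {z | f z i ≠ g z i} := by
    rintro z ⟨hz, hne⟩
    by_contra hmem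
    exact hne (h z hz fun i hi => by_contra fun hzi => hmem (mem_biUnion hi hzi))
  obtain ⟨F, hFS, hF, hFcover⟩ := (hK.inter_right (hdiff i₀).isClosed).elim_finite_subcover_image
    (fun i _ => (hdiff i).isOpen) hcover
  refine ⟨F, hFS, hF, fun z hz hzF => by_contra fun hne => ?_⟩
  obtain ⟨i, hi, hzi⟩ := mem_iUnion₂.1 (hFcover ⟨hz, hne⟩)
  exact hzi (hzF hi)

end Compactness

def shiftBy (k : ℤ) (x : ℤ → A) : ℤ → A := fun i => x (i + k)

@[simp]
theorem shiftBy_zero (x : ℤ → A) : shiftBy 0 x = x := by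
  funext i
  simp [shiftBy]

theorem shiftBy_shiftBy (a b : ℤ) (x : ℤ → A) : shiftBy a (shiftBy b x) = shiftBy (a + b) x := by
  funext i
  simp [shiftBy, add_assoc]

theorem shiftBy_neg_shiftBy (k : ℤ) (x : ℤ → A) : shiftBy (-k) (shiftBy k x) = x := by
  rw [shiftBy_shiftBy, neg_add_cancel, shiftBy_zero]

theorem shiftBy_injective (k : ℤ) : Injective (shiftBy k : (ℤ → A) → ℤ → A) :=
  LeftInverse.injective (shiftBy_neg_shiftBy k)

section Codes

variable {X : Set (ℤ → A)} {Y : Set (ℤ → B)} {φ : X → Y}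

def FiberwiseDetermines (φ : X → Y) (S : Set ℤ) (i : ℤ) : Prop :=
  ∀ x x' : X, φ x = φ x' → EqOn (x : ℤ → A) x' S → (x : ℤ → A) i = (x' : ℤ → A) i

theorem FiberwiseDetermines.mono {S T : Set ℤ} {i : ℤ} (h : FiberwiseDetermines φ S i)
    (hST : S ⊆ T) : FiberwiseDetermines φ T i :=
  fun x x' he hx => h x x' he (hx.mono hST)

theorem RightClosing.fiberwiseDetermines (hrc : RightClosing φ) :
    FiberwiseDetermines φ (Iic 0) 1 := fun x x' he hx => by
  rw [hrc x x' ⟨0, fun i hi => hx hi⟩ he]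

theorem LeftClosing.fiberwiseDetermines (hlc : LeftClosing φ) :
    FiberwiseDetermines φ (Ici 0) (-1) := fun x x' he hx => by
  rw [hlc x x' ⟨0, fun i hi => hx hi⟩ he]

variable [TopologicalSpace A] [TopologicalSpace B]

theorem IsCode.exists_shiftBy (hX : shiftMap '' X = X) (hφ : IsCode φ) (k : ℤ) (x : X) :
    ∃ x' : X, (x' : ℤ → A) = shiftBy k x ∧ (φ x' : ℤ → B) = shiftBy k (φ x) := by
  have forward (x : X) :
      ∃ x' : X, (x' : ℤ → A) = shiftBy 1 x ∧ (φ x' : ℤ → B) = shiftBy 1 (φ x) :=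
    have hx : shiftMap (x : ℤ → A) ∈ X := hX.subset (mem_image_of_mem _ x.2)
    ⟨⟨_, hx⟩, rfl, hφ.2 x hx⟩
  have backward (x : X) :
      ∃ x' : X, (x' : ℤ → A) = shiftBy (-1) x ∧ (φ x' : ℤ → B) = shiftBy (-1) (φ x) := by
    obtain ⟨x, hx⟩ := x
    obtain ⟨w, hw, rfl⟩ : x ∈ shiftMap '' X := hX.symm ▸ hx
    refine ⟨⟨w, hw⟩, (shiftBy_neg_shiftBy 1 w).symm, ?_⟩
    rw [hφ.2 ⟨w, hw⟩ hx]
    exact (shiftBy_neg_shiftBy 1 _).symm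
  induction k using Int.induction_on generalizing x with
  | zero => exact ⟨x, by simp, by simp⟩
  | succ k ih =>
    obtain ⟨x₁, hx₁, hφx₁⟩ := forward x
    obtain ⟨x', hx', hφx'⟩ := ih x₁
    exact ⟨x', by rw [hx', hx₁, shiftBy_shiftBy], by rw [hφx', hφx₁, shiftBy_shiftBy]⟩
  | pred k ih =>
    obtain ⟨x₁, hx₁, hφx₁⟩ := backward x
    obtain ⟨x', hx', hφx'⟩ := ih x₁
    exact ⟨x', by rw [hx', hx₁, shiftBy_shiftBy, sub_eq_add_neg],
      by rw [hφx', hφx₁, shiftBy_shiftBy, sub_eq_add_neg]⟩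

theorem FiberwiseDetermines.shift (hX : shiftMap '' X = X) (hφ : IsCode φ) {S : Set ℤ} {i : ℤ}
    (h : FiberwiseDetermines φ S i) (k : ℤ) :
    FiberwiseDetermines φ ((· + k) '' S) (i + k) := by
  intro x x' he hx
  obtain ⟨z, hz, hφz⟩ := hφ.exists_shiftBy hX k x
  obtain ⟨z', hz', hφz'⟩ := hφ.exists_shiftBy hX k x'
  have := h z z' (Subtype.ext (by rw [hφz, hφz', he])) fun j hj => by
    rw [hz, hz']
    exact hx (mem_image_of_mem _ hj)
  rwa [hz, hz'] at this

end Codes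

section Closing

variable [Finite A] [TopologicalSpace A] [DiscreteTopology A] [TopologicalSpace B] [T2Space B]
  {X : Set (ℤ → A)} {Y : Set (ℤ → B)} {φ : X → Y}

theorem FiberwiseDetermines.exists_finite (hX : IsClosed X) (hφ : Continuous φ) {S : Set ℤ}
    {i : ℤ} (h : FiberwiseDetermines φ S i) : ∃ F ⊆ S, F.Finite ∧ FiberwiseDetermines φ F i := by
  have := isCompact_iff_compactSpace.mp hX.isCompact
  obtain ⟨F, hFS, hF, hFi⟩ :=
    (isClosed_eq (hφ.comp continuous_fst) (hφ.comp continuous_snd)).isCompact.exists_finite_eqOn_imp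
      (f := fun q : X × X => (q.1 : ℤ → A)) (g := fun q => (q.2 : ℤ → A))
      (continuous_subtype_val.comp continuous_fst) (continuous_subtype_val.comp continuous_snd)
      fun q hq => h q.1 q.2 hq
  exact ⟨F, hFS, hF, fun x x' he => hFi (x, x') he⟩

theorem BiClosing.exists_eq_of_eqOn_Icc (hX : IsSubshift X) (hφ : IsCode φ) (hbc : BiClosing φ) :
    ∃ n : ℕ, ∀ x x' : X, φ x = φ x' → EqOn (x : ℤ → A) x' (Icc (-n) n) → x = x' := by
  obtain ⟨F₁, hF₁, hF₁fin, h₁⟩ := hbc.1.fiberwiseDetermines.exists_finite hX.1 hφ.1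
  obtain ⟨F₂, hF₂, hF₂fin, h₂⟩ := hbc.2.fiberwiseDetermines.exists_finite hX.1 hφ.1
  obtain ⟨n, hn₁, hn₂⟩ : ∃ n : ℕ, F₁ ⊆ Icc (-n) 0 ∧ F₂ ⊆ Icc 0 n := by
    obtain ⟨a, ha⟩ := hF₁fin.bddBelow
    obtain ⟨b, hb⟩ := hF₂fin.bddAbove
    refine ⟨max (-a).toNat b.toNat, fun i hi => ⟨?_, hF₁ hi⟩, fun i hi => ⟨hF₂ hi, ?_⟩⟩
    · have := ha hi
      omega
    · have := hb hi
      omega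
  have up (k : ℤ) := (h₁.mono hn₁).shift hX.2 hφ k
  have down (k : ℤ) := (h₂.mono hn₂).shift hX.2 hφ k
  simp only [image_add_const_Icc] at up down
  refine ⟨n, fun x x' he hx => Subtype.ext (funext fun i => ?_)⟩
  have grow (j : ℕ) : EqOn (x : ℤ → A) x' (Icc (-n - j) (n + j)) := by
    induction j with
    | zero => simpa using hx
    | succ j ih =>
      rintro i ⟨hi₁, hi₂⟩
      push_cast at hi₁ hi₂
      rcases (by omega : i = -n - j - 1 ∨ (-n - j ≤ i ∧ i ≤ n + j) ∨ i = n + j + 1)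
        with rfl | hi | rfl
      · have := down (-n - j) x x' he (ih.mono (Icc_subset_Icc (by omega) (by omega)))
        rwa [show (-1 : ℤ) + (-n - j) = -n - j - 1 by ring] at this
      · exact ih hi
      · have := up (n + j) x x' he (ih.mono (Icc_subset_Icc (by omega) (by omega)))
        rwa [show (1 : ℤ) + (n + j) = n + j + 1 by ring] at this
  exact grow i.natAbs ⟨by omega, by omega⟩

end Closing

section Fibers

variable {X : Set (ℤ → A)} {Y : Set (ℤ → B)} {φ : X → Y}

theorem finite_fiber_of_eq_of_eqOn [Finite A] {n : ℕ}
    (hsep : ∀ x x' : X, φ x = φ x' → EqOn (x : ℤ → A) x' (Icc (-n) n) → x = x') (y : Y) :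
    (φ ⁻¹' {y}).Finite :=
  Finite.of_finite_image (f := fun x : X => (Icc (-n : ℤ) n).domRestrict (x : ℤ → A)) (toFinite _)
    fun x hx x' hx' h => hsep x x' (hx.trans hx'.symm) (domRestrict_eq_domRestrict_iff.1 h)

def pointsWithPreimages (φ : X → Y) (k : ℕ) : Set (ℤ → B) :=
  {z | ∃ v : Fin k → X, Injective v ∧ ∀ j, (φ (v j) : ℤ → B) = z}

theorem coe_mem_pointsWithPreimages_iff {y : Y} (hfin : (φ ⁻¹' {y}).Finite) {k : ℕ} :
    (y : ℤ → B) ∈ pointsWithPreimages φ k ↔ k ≤ Nat.card (φ ⁻¹' {y}) := by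
  have := hfin.to_subtype
  have := Fintype.ofFinite (φ ⁻¹' {y})
  have hcard : k ≤ Nat.card (φ ⁻¹' {y}) ↔ Nonempty (Fin k ↪ φ ⁻¹' {y}) := by
    rw [Function.Embedding.nonempty_iff_card_le, Fintype.card_fin, Nat.card_eq_fintype_card]
  rw [hcard]
  constructor
  · rintro ⟨v, hv, hφv⟩
    exact ⟨⟨fun j => ⟨v j, Subtype.ext (hφv j)⟩, fun j j' h => hv (congrArg Subtype.val h)⟩⟩
  · rintro ⟨e⟩
    exact ⟨fun j => e j, fun j j' h => e.injective (Subtype.ext h),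
      fun j => congrArg Subtype.val (e j).2⟩

theorem IsCode.shiftBy_mem_pointsWithPreimages [TopologicalSpace A] [TopologicalSpace B]
    (hX : shiftMap '' X = X) (hφ : IsCode φ) {k : ℕ} {z : ℤ → B}
    (hz : z ∈ pointsWithPreimages φ k) (t : ℤ) : shiftBy t z ∈ pointsWithPreimages φ k := by
  obtain ⟨v, hv, hφv⟩ := hz
  choose w hw hφw using fun j => hφ.exists_shiftBy hX t (v j)
  refine ⟨w, fun j j' h => hv (Subtype.ext (shiftBy_injective t ?_)), fun j => by rw [hφw, hφv]⟩
  rw [← hw, ← hw, h]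

theorem isClosed_pointsWithPreimages [Finite A] [TopologicalSpace A] [DiscreteTopology A]
    [TopologicalSpace B] [T2Space B] (hX : IsClosed X) (hφ : Continuous φ) {n : ℕ}
    (hsep : ∀ x x' : X, φ x = φ x' → EqOn (x : ℤ → A) x' (Icc (-n) n) → x = x') (k : ℕ) :
    IsClosed (pointsWithPreimages φ k) := by
  have := isCompact_iff_compactSpace.mp hX.isCompact
  -- distinct points of a fiber differ on the window `[-n, n]`, which is a clopen condition
  have hwindow : pointsWithPreimages φ k = Prod.fst ''
      ((⋂ j, {p : (ℤ → B) × (Fin k → X) | (φ (p.2 j) : ℤ → B) = p.1}) ∩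
        (fun p j => (Icc (-n : ℤ) n).domRestrict (p.2 j : ℤ → A)) ⁻¹' {w | Injective w}) := by
    ext z
    constructor
    · rintro ⟨v, hv, hφv⟩
      refine ⟨(z, v), ⟨mem_iInter.2 hφv, fun j j' h => hv ?_⟩, rfl⟩
      exact hsep _ _ (Subtype.ext ((hφv j).trans (hφv j').symm))
        (domRestrict_eq_domRestrict_iff.1 h)
    · rintro ⟨⟨z, v⟩, ⟨hφv, hv⟩, rfl⟩
      exact ⟨v, fun j j' h => hv (by simp only [h]), fun j => mem_iInter.1 hφv j⟩
  rw [hwindow]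
  exact isClosedMap_fst_of_compactSpace _
    ((isClosed_iInter fun j => isClosed_eq (by fun_prop) (by fun_prop)).inter
      ((isClopen_discrete {w : Fin k → Icc (-n : ℤ) n → A | Injective w}).isClosed.preimage
        (by fun_prop)))

end Fibers

theorem DoublyTransitive.exists_shiftBy_eqOn_Icc {Y : Set (ℤ → B)} {y z : ℤ → B}
    (hy : DoublyTransitive Y y) (hz : z ∈ Y) (m : ℕ) :
    ∃ t : ℤ, EqOn (shiftBy t y) z (Icc (-m) m) := by
  set w := List.ofFn fun i : Fin (2 * m + 1) => z (-m + i)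
  have hw : WordIn Y w :=
    ⟨z, hz, -m, fun i => by simp only [w, List.get_eq_getElem, List.getElem_ofFn]⟩
  obtain ⟨⟨k, -, hk⟩, -⟩ := hy w hw 0
  refine ⟨k + m, fun i ⟨hi₁, hi₂⟩ => ?_⟩
  have := hk ⟨(i + m).toNat, by simp only [w, List.length_ofFn]; omega⟩
  simp only [w, List.get_eq_getElem, List.getElem_ofFn] at this
  rwa [show k + ((i + m).toNat : ℤ) = i + (k + m) by omega,
    show -(m : ℤ) + (i + m).toNat = i by omega] at this

theorem mem_closure_of_forall_eqOn_Icc [TopologicalSpace B] [DiscreteTopology B]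
    {s : Set (ℤ → B)} {z : ℤ → B} (h : ∀ m : ℕ, ∃ x ∈ s, EqOn x z (Icc (-m) m)) :
    z ∈ closure s := by
  choose u hu hz using h
  refine mem_closure_of_tendsto (f := u) (b := atTop) (tendsto_pi_nhds.2 fun i => ?_)
    (Eventually.of_forall hu)
  rw [nhds_discrete, tendsto_pure]
  filter_upwards [eventually_ge_atTop i.natAbs] with m hm
  exact hz m ⟨by omega, by omega⟩

theorem card_fiber_le_of_doublyTransitive [Finite A] [TopologicalSpace A] [DiscreteTopology A]
    [TopologicalSpace B] [DiscreteTopology B] {X : Set (ℤ → A)} {Y : Set (ℤ → B)} {φ : X → Y}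
    (hX : IsSubshift X) (hφ : IsCode φ) {n : ℕ}
    (hsep : ∀ x x' : X, φ x = φ x' → EqOn (x : ℤ → A) x' (Icc (-n) n) → x = x')
    {y : Y} (hy : DoublyTransitive Y y) (y₀ : Y) :
    Nat.card (φ ⁻¹' {y}) ≤ Nat.card (φ ⁻¹' {y₀}) := by
  set k := Nat.card (φ ⁻¹' {y})
  have horbit : range (fun t => shiftBy t (y : ℤ → B)) ⊆ pointsWithPreimages φ k := by
    rintro _ ⟨t, rfl⟩
    exact hφ.shiftBy_mem_pointsWithPreimages hX.2
      ((coe_mem_pointsWithPreimages_iff (finite_fiber_of_eq_of_eqOn hsep y)).2 le_rfl) t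
  have hy₀ : (y₀ : ℤ → B) ∈ closure (range fun t => shiftBy t (y : ℤ → B)) :=
    mem_closure_of_forall_eqOn_Icc fun m =>
      let ⟨t, ht⟩ := hy.exists_shiftBy_eqOn_Icc y₀.2 m
      ⟨_, mem_range_self t, ht⟩
  exact (coe_mem_pointsWithPreimages_iff (finite_fiber_of_eq_of_eqOn hsep y₀)).1
    ((isClosed_pointsWithPreimages hX.1 hφ.1 hsep k).closure_subset_iff.2 horbit hy₀)

theorem biclosing_factor_has_degree_general {A : Type*} {B : Type*} [Finite A] [TopologicalSpace A] [DiscreteTopology A]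
    [TopologicalSpace B] [DiscreteTopology B]
    {X : Set (ℤ → A)} {Y : Set (ℤ → B)} (hX : IsSubshift X)
    (φ : X → Y) (hφ : IsCode φ)
    (hsurj : Function.Surjective φ) (hbc : BiClosing φ) :
    ∃ d : ℕ, 0 < d ∧
      (∀ y : Y, DoublyTransitive Y y.1 →
        (φ ⁻¹' {y}).Finite ∧ Nat.card (φ ⁻¹' {y}) = d) ∧
      (∀ y : Y, ∃ S : Finset X, S.card = d ∧ ∀ x ∈ S, φ x = y) := by
  obtain ⟨n, hsep⟩ := hbc.exists_eq_of_eqOn_Icc hX hφ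
  have hfin := finite_fiber_of_eq_of_eqOn hsep
  cases isEmpty_or_nonempty Y
  · exact ⟨1, one_pos, fun y => isEmptyElim y, fun y => isEmptyElim y⟩
  obtain ⟨y₀, hy₀⟩ : ∃ y₀ : Y, ∀ y, Nat.card (φ ⁻¹' {y₀}) ≤ Nat.card (φ ⁻¹' {y}) :=
    ⟨_, fun y => argmin_le (fun y => Nat.card (φ ⁻¹' {y})) y⟩
  refine ⟨Nat.card (φ ⁻¹' {y₀}), ?_, fun y hy => ⟨hfin y, ?_⟩, fun y => ?_⟩
  · have := (hfin y₀).to_subtype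
    obtain ⟨x, hx⟩ := hsurj y₀
    have : Nonempty (φ ⁻¹' {y₀}) := ⟨⟨x, hx⟩⟩
    exact Nat.card_pos
  · exact (card_fiber_le_of_doublyTransitive hX hφ hsep hy y₀).antisymm (hy₀ y)
  · obtain ⟨v, hv, hφv⟩ := (coe_mem_pointsWithPreimages_iff (hfin y)).2 (hy₀ y)
    refine ⟨Finset.univ.map ⟨v, hv⟩, by rw [Finset.card_map, Finset.card_univ, Fintype.card_fin],
      fun x hx => ?_⟩
    obtain ⟨j, -, rfl⟩ := Finset.mem_map.1 hx
    exact Subtype.ext (hφv j)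

theorem biclosing_factor_has_degree {A : Type*} {B : Type*} [Finite A] [TopologicalSpace A] [DiscreteTopology A]
    [Finite B] [TopologicalSpace B] [DiscreteTopology B]
    {X : Set (ℤ → A)} {Y : Set (ℤ → B)} (hX : IsSubshift X) (hY : IsSubshift Y)
    (φ : X → Y) (hφ : IsCode φ)
    (hsurj : Function.Surjective φ) (hbc : BiClosing φ)
    (hYirr : IrreducibleSubshift Y) :
    ∃ d : ℕ, 0 < d ∧
      (∀ y : Y, DoublyTransitive Y y.1 →
        (φ ⁻¹' {y}).Finite ∧ Nat.card (φ ⁻¹' {y}) = d) ∧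
      (∀ y : Y, ∃ S : Finset X, S.card = d ∧ ∀ x ∈ S, φ x = y) :=
  biclosing_factor_has_degree_general hX φ hφ hsurj hbc
end

section
/- Let φ : X → Y be an open code between shift spaces. If φ is constant-to-one, then φ is bi-closing. -/
open Set Function Filter

variable {A : Type*} {B : Type*} {C : Type*}

/-! An open map `φ` all of whose fibres have `d` points is locally injective: near `φ z`, every
fibre meets each of the pairwise disjoint neighbourhoods of the `d` points over `φ z`, and these
meetings already exhaust it. On the compact space `X` local injectivity is uniform, giving a
window `[-M, M]` on which two points of `X` with the same image cannot agree unless they are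
equal. Two asymptotic points with the same image, shifted far enough, agree on that window and
still have the same image, since `φ` commutes with the shift. -/

open Topology

section LocalInjectivity

variable {X Y : Type*} {f : X → Y}

theorem ExactlyDToOne.subsingleton_inter_preimage {d : ℕ} (hd : ExactlyDToOne f d) {y y' : Y}
    {U : X → Set X} (hU : (f ⁻¹' {y}).PairwiseDisjoint U)
    (hmeet : ∀ p ∈ f ⁻¹' {y}, ∃ q ∈ U p, f q = y') {x : X} (hx : f x = y) :
    (U x ∩ f ⁻¹' {y'}).Subsingleton := by
  choose! g hgU hgf using hmeet
  have hg_injOn : (f ⁻¹' {y}).InjOn g := fun p hp p' hp' hpp' =>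
    hU.elim hp hp' (Set.not_disjoint_iff.mpr ⟨g p, hgU p hp, hpp' ▸ hgU p' hp'⟩)
  have himage : g '' (f ⁻¹' {y}) = f ⁻¹' {y'} := by
    refine Set.eq_of_subset_of_ncard_le ?_ ?_ (hd y').1
    · rintro _ ⟨p, hp, rfl⟩
      exact hgf p hp
    · rw [hg_injOn.ncard_image, ← Nat.card_coe_set_eq, ← Nat.card_coe_set_eq, (hd y).2,
        (hd y').2]
  have hx_mem : x ∈ f ⁻¹' {y} := hx
  have heq_g : ∀ a ∈ U x ∩ f ⁻¹' {y'}, a = g x := by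
    rintro a ⟨haU, hay⟩
    rw [← himage] at hay
    obtain ⟨p, hp, rfl⟩ := hay
    rw [hU.elim hp hx_mem (Set.not_disjoint_iff.mpr ⟨g p, hgU p hp, haU⟩)]
  exact fun a ha b hb => (heq_g a ha).trans (heq_g b hb).symm

variable [TopologicalSpace X] [TopologicalSpace Y]

theorem ExactlyDToOne.isLocallyInjective [T2Space X] {d : ℕ} (hd : ExactlyDToOne f d)
    (hc : Continuous f) (ho : IsOpenMap f) : IsLocallyInjective f := by
  intro x
  obtain ⟨U, hUx, hU⟩ := (hd (f x)).1.t2_separation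
  set V := ⋂ p ∈ f ⁻¹' {f x}, f '' U p
  have hV : IsOpen V := (hd (f x)).1.isOpen_biInter fun p _ => ho _ (hUx p).2
  have hxV : f x ∈ V := Set.mem_iInter₂.mpr fun p hp => ⟨p, (hUx p).1, hp⟩
  refine ⟨U x ∩ f ⁻¹' V, (hUx x).2.inter (hV.preimage hc), ⟨(hUx x).1, hxV⟩, ?_⟩
  rintro a ⟨haU, haV⟩ b ⟨hbU, -⟩ hab
  refine hd.subsingleton_inter_preimage hU (y' := f a) (fun p hp => ?_) rfl
    ⟨haU, rfl⟩ ⟨hbU, hab.symm⟩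
  exact Set.mem_iInter₂.mp haV p hp

theorem IsLocallyInjective.isClosed_setOf_apply_eq_and_ne [T2Space Y] (hc : Continuous f)
    (hi : IsLocallyInjective f) : IsClosed {p : X × X | f p.1 = f p.2 ∧ p.1 ≠ p.2} := by
  rw [← isOpen_compl_iff, isOpen_iff_mem_nhds]
  rintro ⟨a, b⟩ hab
  by_cases hfab : f a = f b
  · obtain rfl : a = b := by simpa [hfab] using hab
    obtain ⟨U, hU, haU, hinj⟩ := hi a
    filter_upwards [prod_mem_nhds (hU.mem_nhds haU) (hU.mem_nhds haU)] with p hp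
    simpa using fun h => hinj hp.1 hp.2 h
  · have hopen : IsOpen {p : X × X | f p.1 ≠ f p.2} :=
      (isClosed_eq (hc.comp continuous_fst) (hc.comp continuous_snd)).isOpen_compl
    filter_upwards [hopen.mem_nhds hfab] with p hp
    simp [hp]

theorem IsLocallyInjective.exists_eq_of_mem_of_directed [CompactSpace X] [T2Space Y]
    (hc : Continuous f) (hi : IsLocallyInjective f) {ι : Type*} [Nonempty ι]
    {W : ι → Set (X × X)} (hWc : ∀ i, IsClosed (W i)) (hWd : Directed (· ⊇ ·) W)
    (hW : ⋂ i, W i ⊆ Set.diagonal X) :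
    ∃ i, ∀ p ∈ W i, f p.1 = f p.2 → p.1 = p.2 := by
  have hP := (hi.isClosed_setOf_apply_eq_and_ne hc).isCompact
  obtain ⟨i, hi⟩ := hP.elim_directed_family_closed W hWc
    (Set.eq_empty_of_forall_notMem fun p ⟨hp, hpW⟩ => hp.2 (hW hpW)) hWd
  refine ⟨i, fun p hpW hfp => ?_⟩
  by_contra hne
  exact (Set.eq_empty_iff_forall_notMem.mp hi) p ⟨⟨hfp, hne⟩, hpW⟩

end LocalInjectivity

section Shift

theorem shiftMap_injective : Function.Injective (shiftMap : (ℤ → A) → ℤ → A) :=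
  fun x x' h => funext fun i => by simpa [shiftMap] using congrFun h (i - 1)

theorem shiftMap_comp_add (x : ℤ → A) (k : ℤ) :
    shiftMap (fun i => x (i + k)) = fun i => x (i + (k + 1)) :=
  funext fun i => by simp only [shiftMap, add_assoc, add_comm 1 k]

variable [TopologicalSpace A] [TopologicalSpace B] {X : Set (ℤ → A)} {Y : Set (ℤ → B)}
  {φ : X → Y}

theorem IsSubshift.shiftMap_mem_iff (hX : IsSubshift X) {x : ℤ → A} :
    shiftMap x ∈ X ↔ x ∈ X := by
  refine ⟨fun hx => ?_, fun hx => hX.2 ▸ Set.mem_image_of_mem shiftMap hx⟩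
  obtain ⟨x', hx', hxx'⟩ := (hX.2.symm ▸ hx : shiftMap x ∈ shiftMap '' X)
  exact shiftMap_injective hxx' ▸ hx'

theorem IsSubshift.comp_add_mem (hX : IsSubshift X) {x : ℤ → A} (hx : x ∈ X) (n : ℤ) :
    (fun i => x (i + n)) ∈ X := by
  induction n using Int.induction_on with
  | zero => simpa using hx
  | succ k ih => exact shiftMap_comp_add x k ▸ hX.shiftMap_mem_iff.mpr ih
  | pred k ih =>
    exact hX.shiftMap_mem_iff.mp (by rw [shiftMap_comp_add, sub_add_cancel]; exact ih)

theorem IsCode.coe_apply_of_coe_eq_shiftMap (hφ : IsCode φ) {x y : X}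
    (hxy : (y : ℤ → A) = shiftMap x) : (φ y : ℤ → B) = shiftMap (φ x) := by
  obtain ⟨y, hy⟩ := y
  subst hxy
  exact hφ.2 x hy

theorem IsCode.coe_apply_of_coe_eq_comp_add (hX : IsSubshift X) (hφ : IsCode φ) (n : ℤ)
    {x y : X} (hxy : (y : ℤ → A) = fun i => (x : ℤ → A) (i + n)) :
    (φ y : ℤ → B) = fun i => (φ x : ℤ → B) (i + n) := by
  induction n using Int.induction_on generalizing y with
  | zero =>
    obtain rfl : y = x := Subtype.ext (by simpa using hxy)
    simp
  | succ k ih =>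
    set z : X := ⟨_, hX.comp_add_mem x.2 k⟩
    rw [← shiftMap_comp_add, ← ih (y := z) rfl]
    exact hφ.coe_apply_of_coe_eq_shiftMap (by rw [hxy, ← shiftMap_comp_add])
  | pred k ih =>
    set z : X := ⟨_, hX.comp_add_mem x.2 (-k)⟩
    apply shiftMap_injective
    rw [shiftMap_comp_add, sub_add_cancel, ← ih (y := z) rfl]
    exact (hφ.coe_apply_of_coe_eq_shiftMap (by rw [hxy, shiftMap_comp_add, sub_add_cancel])).symm

theorem IsLocallyInjective.exists_window_eq [Finite A] [DiscreteTopology A] (hX : IsClosed X)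
    {Z : Type*} [TopologicalSpace Z] [T2Space Z] {f : X → Z} (hc : Continuous f)
    (hi : IsLocallyInjective f) :
    ∃ M : ℕ, ∀ x x' : X, (∀ i : ℤ, |i| ≤ M → (x : ℤ → A) i = (x' : ℤ → A) i) →
      f x = f x' → x = x' := by
  have : CompactSpace X := isCompact_iff_compactSpace.mp hX.isCompact
  set W : ℕ → Set (X × X) :=
    fun M => {p | ∀ i : ℤ, |i| ≤ M → (p.1 : ℤ → A) i = (p.2 : ℤ → A) i}
  have hWc : ∀ M, IsClosed (W M) := fun M => by
    have hcoord : ∀ i : ℤ, Continuous fun q : X => (q : ℤ → A) i :=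
      fun i => (continuous_apply i).comp continuous_subtype_val
    simp only [W, Set.ofPred_forall]
    exact isClosed_iInter fun i => isClosed_iInter fun _ =>
      isClosed_eq ((hcoord i).comp continuous_fst) ((hcoord i).comp continuous_snd)
  have hWd : Directed (· ⊇ ·) W :=
    Antitone.directed_ge fun M M' hMM' p hp i hi => hp i (hi.trans (by exact_mod_cast hMM'))
  have hW : ⋂ M, W M ⊆ Set.diagonal X := fun p hp =>
    Subtype.ext <| funext fun i => Set.mem_iInter.mp hp i.natAbs i (by simp)
  obtain ⟨M, hM⟩ := hi.exists_eq_of_mem_of_directed hc hWc hWd hW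
  exact ⟨M, fun x x' hxx' => hM (x, x') hxx'⟩

theorem IsCode.eq_of_window_eq_comp_add (hX : IsSubshift X) (hφ : IsCode φ) {M : ℕ}
    (hM : ∀ x x' : X, (∀ i : ℤ, |i| ≤ M → (x : ℤ → A) i = (x' : ℤ → A) i) →
      φ x = φ x' → x = x')
    (n : ℤ) {x x' : X}
    (hxx' : ∀ i : ℤ, |i| ≤ M → (x : ℤ → A) (i + n) = (x' : ℤ → A) (i + n))
    (h : φ x = φ x') : x = x' := by
  set y : X := ⟨_, hX.comp_add_mem x.2 n⟩
  set y' : X := ⟨_, hX.comp_add_mem x'.2 n⟩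
  have hφy : φ y = φ y' := Subtype.ext <| by
    rw [hφ.coe_apply_of_coe_eq_comp_add hX n (y := y) rfl,
      hφ.coe_apply_of_coe_eq_comp_add hX n (y := y') rfl, h]
  have hyy' : (y : ℤ → A) = y' := congrArg Subtype.val (hM y y' hxx' hφy)
  exact Subtype.ext <| funext fun i => by simpa [y, y'] using congrFun hyy' (i - n)

end Shift

theorem open_constant_to_one_is_biclosing_general {A : Type*} {B : Type*} [Finite A] [TopologicalSpace A] [DiscreteTopology A]
    [TopologicalSpace B] [DiscreteTopology B]
    {X : Set (ℤ → A)} {Y : Set (ℤ → B)} (hX : IsSubshift X)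
    (φ : X → Y) (hφ : IsCode φ)
    (hopen : IsOpenMap φ) (hcto : ConstantToOne φ) :
    BiClosing φ := by
  obtain ⟨d, hd⟩ := hcto
  obtain ⟨M, hM⟩ := (hd.isLocallyInjective hφ.1 hopen).exists_window_eq hX.1 hφ.1
  refine ⟨fun x x' ⟨N, hN⟩ h => ?_, fun x x' ⟨N, hN⟩ h => ?_⟩
  · exact hφ.eq_of_window_eq_comp_add hX hM (N - M)
      (fun i hi => hN _ (by linarith [le_abs_self i])) h
  · exact hφ.eq_of_window_eq_comp_add hX hM (N + M)
      (fun i hi => hN _ (by linarith [neg_abs_le i])) h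

theorem open_constant_to_one_is_biclosing {A : Type*} {B : Type*} [Finite A] [TopologicalSpace A] [DiscreteTopology A]
    [Finite B] [TopologicalSpace B] [DiscreteTopology B]
    {X : Set (ℤ → A)} {Y : Set (ℤ → B)} (hX : IsSubshift X) (hY : IsSubshift Y)
    (φ : X → Y) (hφ : IsCode φ)
    (hopen : IsOpenMap φ) (hcto : ConstantToOne φ) :
    BiClosing φ :=
  open_constant_to_one_is_biclosing_general hX φ hφ hopen hcto
end
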